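/- arXiv:2202.05913 — 3 statements merged into one kernel-verified Lean document; each statement's English description precedes it below -/
import Mathlib

section
/- Let f : [n]^{k+1} → [n]^{k+1} be monotone and let m ∈ [n]. Then there exists a point x ∈ [n]^{k+1} with x_{k+1} = m such that x is either prefixed (f(x) ≼ x) or postfixed (x ≼ f(x)). -/
/-!
Fix the last coordinate to `m`. On the slice, the first `k` coordinates of `f` give a monotone
self-map of the box `[1, n]^k`, which is a complete lattice, so by Knaster–Tarski it has a fixed
point `x`. Then `f (x, m)` and `(x, m)` differ at most in the last coordinate, and any two
integers are comparable.
-/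

/-- `x` lies in the grid `[n]^k = {1,...,n}^k` (coordinates as integers). -/
def inGrid (n : ℕ) {k : ℕ} (x : Fin k → ℤ) : Prop :=
  ∀ i, 1 ≤ x i ∧ x i ≤ (n : ℤ)

open Set Function

theorem MonotoneOn.exists_isFixedPt_of_mapsTo_Icc {α : Type*} [ConditionallyCompleteLattice α]
    {a b : α} (hab : a ≤ b) {g : α → α} (hmono : MonotoneOn g (Icc a b))
    (hmaps : MapsTo g (Icc a b) (Icc a b)) : ∃ x ∈ Icc a b, IsFixedPt g x := by
  have : Fact (a ≤ b) := ⟨hab⟩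
  let G : Icc a b →o Icc a b := ⟨hmaps.restrict, fun x y hxy => hmono x.2 y.2 hxy⟩
  exact ⟨G.lfp, G.lfp.2, congrArg Subtype.val G.map_lfp⟩

theorem Fin.snoc_le_snoc_iff {α : Type*} [Preorder α] {k : ℕ} {x y : Fin k → α} {a b : α} :
    (Fin.snoc x a : Fin (k + 1) → α) ≤ Fin.snoc y b ↔ x ≤ y ∧ a ≤ b := by
  simp only [Pi.le_def, Fin.forall_fin_succ', Fin.snoc_castSucc, Fin.snoc_last]

theorem inGrid_iff_mem_Icc {n k : ℕ} {x : Fin k → ℤ} :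
    inGrid n x ↔ x ∈ Icc (1 : Fin k → ℤ) (fun _ => (n : ℤ)) :=
  forall_and.trans Iff.rfl

theorem inGrid_snoc {n k : ℕ} {x : Fin k → ℤ} {a : ℤ} :
    inGrid n (Fin.snoc x a : Fin (k + 1) → ℤ) ↔ inGrid n x ∧ 1 ≤ a ∧ a ≤ (n : ℤ) := by
  simp only [inGrid, Fin.forall_fin_succ', Fin.snoc_castSucc, Fin.snoc_last]

theorem exists_pre_or_postfixed_on_slice (n k : ℕ)
    (f : (Fin (k + 1) → ℤ) → Fin (k + 1) → ℤ)
    (hmaps : ∀ x, inGrid n x → inGrid n (f x))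
    (hmono : ∀ x y, inGrid n x → inGrid n y → x ≤ y → f x ≤ f y)
    (m : ℤ) (hm : 1 ≤ m ∧ m ≤ (n : ℤ)) :
    ∃ x : Fin k → ℤ, inGrid n x ∧
      (f (Fin.snoc x m) ≤ Fin.snoc x m ∨ (Fin.snoc x m : Fin (k + 1) → ℤ) ≤ f (Fin.snoc x m)) := by
  set box : Set (Fin k → ℤ) := Icc 1 fun _ => (n : ℤ)
  set g : (Fin k → ℤ) → Fin k → ℤ := fun x => Fin.init (f (Fin.snoc x m))
  have hslice : ∀ x ∈ box, inGrid n (Fin.snoc x m : Fin (k + 1) → ℤ) :=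
    fun x hx => inGrid_snoc.2 ⟨inGrid_iff_mem_Icc.2 hx, hm⟩
  have hg_mono : MonotoneOn g box := fun x hx y hy hxy i =>
    hmono _ _ (hslice x hx) (hslice y hy) (Fin.snoc_le_snoc_iff.2 ⟨hxy, le_rfl⟩) i.castSucc
  have hg_maps : MapsTo g box box := fun x hx =>
    inGrid_iff_mem_Icc.1 fun i => hmaps _ (hslice x hx) i.castSucc
  obtain ⟨x, hx, hfix⟩ := hg_mono.exists_isFixedPt_of_mapsTo_Icc (fun _ => hm.1.trans hm.2) hg_maps
  have hfx : Fin.init (f (Fin.snoc x m)) = x := hfix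
  refine ⟨x, inGrid_iff_mem_Icc.2 hx, ?_⟩
  rw [← Fin.snoc_init_self (f (Fin.snoc x m)), hfx, Fin.snoc_le_snoc_iff, Fin.snoc_le_snoc_iff]
  simpa only [le_refl, true_and] using le_total _ m
end

section
/- For any function g : [n]^k → {-1,0,1}^{k+1} satisfying (i) x_i + g(x)_i ∈ [n] for all x ∈ [n]^k and i ∈ [k], and (ii) (x,0)+g(x) ≼ (y,0)+g(y) whenever x ≼ y, there exists a point x ∈ [n]^k such that either g(x)_i ≤ 0 for all i ∈ [k+1] or g(x)_i ≥ 0 for all i ∈ [k+1]. -/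
/-- The Tarski* conditions for `g : [n]^k → {-1,0,1}^{k+1}`. -/
def TarskiStarConds (n k : ℕ) (g : (Fin k → ℤ) → Fin (k + 1) → ℤ) : Prop :=
  (∀ x, inGrid n x → ∀ j, g x j = -1 ∨ g x j = 0 ∨ g x j = 1) ∧
  (∀ x, inGrid n x → ∀ i : Fin k, 1 ≤ x i + g x i.castSucc ∧ x i + g x i.castSucc ≤ (n : ℤ)) ∧
  (∀ x y, inGrid n x → inGrid n y → x ≤ y →
    (Fin.snoc x 0 : Fin (k + 1) → ℤ) + g x ≤ (Fin.snoc y 0 : Fin (k + 1) → ℤ) + g y)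
theorem tarskiStar_solution_exists (n k : ℕ) (hn : 1 ≤ n)
    (g : (Fin k → ℤ) → Fin (k + 1) → ℤ)
    (hg : TarskiStarConds n k g) :
    ∃ x, inGrid n x ∧ ((∀ j, g x j ≤ 0) ∨ (∀ j, 0 ≤ g x j)) := by
  obtain ⟨hsign, hstay, hmono⟩ := hg
  set f : (Fin k → ℤ) → (Fin k → ℤ) := fun x i => x i + g x i.castSucc with hf
  have hclose : ∀ x, inGrid n x → inGrid n (f x) := fun x hx i => hstay x hx i
  have hfmono : ∀ x y, inGrid n x → inGrid n y → x ≤ y → f x ≤ f y := by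
    intro x y hx hy hxy i
    have := hmono x y hx hy hxy i.castSucc
    simpa [hf, Fin.snoc_castSucc] using this
  set x₀ : Fin k → ℤ := fun _ => 1 with hx₀def
  have hx₀ : inGrid n x₀ := by
    intro i
    exact ⟨le_refl 1, by simp [hx₀def]; exact_mod_cast hn⟩
  set seq : ℕ → (Fin k → ℤ) := fun m => f^[m] x₀ with hseq
  have hseqsucc : ∀ m, seq (m + 1) = f (seq m) := by
    intro m; simp [hseq, Function.iterate_succ_apply']
  have hgrid : ∀ m, inGrid n (seq m) := by
    intro m
    induction m with
    | zero => exact hx₀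
    | succ m ih => rw [hseqsucc]; exact hclose _ ih
  have hle : ∀ m, seq m ≤ seq (m + 1) := by
    intro m
    induction m with
    | zero =>
      intro i
      rw [hseqsucc]
      exact (hclose x₀ hx₀ i).1
    | succ m ih =>
      rw [hseqsucc, hseqsucc]
      exact hfmono _ _ (hgrid m) (hgrid (m + 1)) ih
  have key : ∃ m, seq (m + 1) = seq m := by
    by_contra h
    push_neg at h
    have hsum : ∀ m, (k : ℤ) + m ≤ ∑ i, seq m i := by
      intro m
      induction m with
      | zero => simp [hseq, hx₀def]
      | succ m ih =>
        have hlt : ∑ i, seq m i < ∑ i, seq (m + 1) i := by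
          obtain ⟨i, hi⟩ := Function.ne_iff.mp (h m)
          refine Finset.sum_lt_sum (fun i _ => hle m i) ⟨i, Finset.mem_univ i, ?_⟩
          exact lt_of_le_of_ne (hle m i) (Ne.symm hi)
        push_cast
        omega
    have hub : ∑ i, seq (n * k + 1) i ≤ (n : ℤ) * k := by
      calc ∑ i, seq (n * k + 1) i ≤ ∑ _i : Fin k, (n : ℤ) :=
            Finset.sum_le_sum (fun i _ => (hgrid (n * k + 1) i).2)
        _ = (n : ℤ) * k := by simp [mul_comm]
    have := hsum (n * k + 1)
    push_cast at this
    omega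
  obtain ⟨m, hm⟩ := key
  refine ⟨seq m, hgrid m, ?_⟩
  have hzero : ∀ i : Fin k, g (seq m) i.castSucc = 0 := by
    intro i
    have : f (seq m) i = seq m i := by rw [← hseqsucc, hm]
    simp only [hf] at this
    omega
  rcases le_total (g (seq m) (Fin.last k)) 0 with h | h
  · left
    intro j
    induction j using Fin.lastCases with
    | last => exact h
    | cast i => rw [hzero i]
  · right
    intro j
    induction j using Fin.lastCases with
    | last => exact h
    | cast i => rw [hzero i]
end

section
/- Let f : [n]^{k+1} → [n]^{k+1} be monotone, fix m ∈ [n], and define g : [n]^k → {-1,0,1}^{k+1} by g(x)_i = sgn(f(x,m)_i − x_i) for i ∈ [k] and g(x)_{k+1} = sgn(f(x,m)_{k+1} − m). Then g satisfies: (i) x_i + g(x)_i ∈ [n] for all x and all i ∈ [k]; and (ii) (x,0)+g(x) ≼ (y,0)+g(y) whenever x ≼ y. -/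
lemma sign_facts (a : ℤ) : (Int.sign a = 1 ↔ 0 < a) ∧ (Int.sign a = 0 ↔ a = 0) ∧
    (Int.sign a = -1 ↔ a < 0) :=
  ⟨Int.sign_eq_one_iff_pos, Int.sign_eq_zero_iff_zero, Int.sign_eq_neg_one_iff_neg⟩

lemma key (a b u v : ℤ) (hab : a ≤ b) (huv : u ≤ v) :
    u + Int.sign (a - u) ≤ v + Int.sign (b - v) := by
  have h1 := sign_facts (a - u)
  have h2 := sign_facts (b - v)
  omega

theorem sign_function_satisfies_tarskiStar (n k : ℕ)
    (f : (Fin (k + 1) → ℤ) → Fin (k + 1) → ℤ)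
    (hmaps : ∀ x, inGrid n x → inGrid n (f x))
    (hmono : ∀ x y, inGrid n x → inGrid n y → x ≤ y → f x ≤ f y)
    (m : ℤ) (hm : 1 ≤ m ∧ m ≤ (n : ℤ))
    (g : (Fin k → ℤ) → Fin (k + 1) → ℤ)
    (hg : ∀ x, g x = Fin.snoc (fun i : Fin k => Int.sign (f (Fin.snoc x m) i.castSucc - x i))
      (Int.sign (f (Fin.snoc x m) (Fin.last k) - m))) :
    (∀ x, inGrid n x → ∀ i : Fin k, 1 ≤ x i + g x i.castSucc ∧ x i + g x i.castSucc ≤ (n : ℤ)) ∧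
    (∀ x y, inGrid n x → inGrid n y → x ≤ y →
      (Fin.snoc x 0 : Fin (k + 1) → ℤ) + g x ≤ (Fin.snoc y 0 : Fin (k + 1) → ℤ) + g y) := by
  have hsnoc : ∀ x : Fin k → ℤ, inGrid n x → inGrid n (Fin.snoc x m : Fin (k+1) → ℤ) := by
    intro x hx i
    refine Fin.lastCases ?_ (fun j => ?_) i
    · simpa using hm
    · simpa using hx j
  constructor
  · intro x hx i
    have hf := hmaps _ (hsnoc x hx) i.castSucc
    have hxi := hx i
    have hs := sign_facts (f (Fin.snoc x m) i.castSucc - x i)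
    rw [hg]
    simp only [Fin.snoc_castSucc]
    omega
  · intro x y hx hy hxy
    have hsle : (Fin.snoc x m : Fin (k+1) → ℤ) ≤ Fin.snoc y m := by
      intro i
      refine Fin.lastCases ?_ (fun j => ?_) i
      · simp
      · simpa using hxy j
    have hfle := hmono _ _ (hsnoc x hx) (hsnoc y hy) hsle
    intro i
    refine Fin.lastCases ?_ (fun j => ?_) i
    · have := key _ _ m m (hfle (Fin.last k)) le_rfl
      simp only [Pi.add_apply, hg, Fin.snoc_last]
      omega
    · have := key _ _ (x j) (y j) (hfle j.castSucc) (hxy j)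
      simp only [Pi.add_apply, hg, Fin.snoc_castSucc]
      omega
end
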